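/- arXiv:2107.01698 — 6 statements merged into one kernel-verified Lean document; each statement's English description precedes it below -/
import Mathlib

section
/- If u is a C^{2r} function on [-1,1] satisfying (-1)^r u^{(2r)} + λ u = 0 on (-1,1) with λ ≥ 0 and u^{(s)}(-1) = u^{(s)}(1) = 0 for all s = 0,...,r-1, then u is identically zero on [-1,1]. (Uniqueness of the solution to the homogeneous higher-order Sturm–Liouville problem.) -/
open Set MeasureTheory intervalIntegral

/-- Uniqueness of the solution to the homogeneous higher-order Sturm–Liouville problem:
if `(-1)^r u^{(2r)} + λ u = 0` on `(-1,1)` with `λ ≥ 0` and `u^{(s)}(±1) = 0` for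
`s = 0,…,r-1`, then `u ≡ 0` on `[-1,1]`. -/
theorem stmt_4 (r : ℕ) (hr : 1 ≤ r) (lam : ℝ) (hlam : 0 ≤ lam) (u : ℝ → ℝ)
    (hu : ContDiff ℝ ((2 * r : ℕ) : ℕ∞) u)
    (hbc : ∀ s < r, iteratedDeriv s u (-1) = 0 ∧ iteratedDeriv s u 1 = 0)
    (hode : ∀ x ∈ Ioo (-1 : ℝ) 1, (-1 : ℝ) ^ r * iteratedDeriv (2 * r) u x + lam * u x = 0) :
    ∀ x ∈ Icc (-1 : ℝ) 1, u x = 0 := by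
  have hcont : ∀ k, k ≤ 2 * r → Continuous (iteratedDeriv k u) := by
    intro k hk
    exact hu.continuous_iteratedDeriv k (by exact_mod_cast hk)
  have hder : ∀ k, k < 2 * r → ∀ x : ℝ,
      HasDerivAt (iteratedDeriv k u) (iteratedDeriv (k + 1) u x) x := by
    intro k hk x
    have h1 : Differentiable ℝ (iteratedDeriv k u) :=
      hu.differentiable_iteratedDeriv k (by exact_mod_cast hk)
    rw [iteratedDeriv_succ]
    exact (h1 x).hasDerivAt
  set J : ℕ → ℝ :=
    fun k => ∫ x in (-1 : ℝ)..1, iteratedDeriv (2 * r - k) u x * iteratedDeriv k u x with hJ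
  have hstep : ∀ k, k < r → J (k + 1) = - J k := by
    intro k hk
    have hk2 : k < 2 * r := by omega
    have hk3 : 2 * r - (k + 1) < 2 * r := by omega
    have heq : 2 * r - (k + 1) + 1 = 2 * r - k := by omega
    have hibp := integral_mul_deriv_eq_deriv_mul
      (u := iteratedDeriv k u) (u' := iteratedDeriv (k + 1) u)
      (v := iteratedDeriv (2 * r - (k + 1)) u) (v' := iteratedDeriv (2 * r - k) u)
      (a := (-1 : ℝ)) (b := 1)
      (fun x _ => hder k hk2 x)
      (fun x _ => by
        have := hder (2 * r - (k + 1)) hk3 x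
        rwa [heq] at this)
      ((hcont (k + 1) (by omega)).intervalIntegrable _ _)
      ((hcont (2 * r - k) (by omega)).intervalIntegrable _ _)
    have hb1 := (hbc k hk).1
    have hb2 := (hbc k hk).2
    rw [hb1, hb2, zero_mul, zero_mul, sub_zero, zero_sub] at hibp
    have e1 : J k = ∫ x in (-1 : ℝ)..1, iteratedDeriv k u x * iteratedDeriv (2 * r - k) u x := by
      rw [hJ]
      exact integral_congr fun x _ => mul_comm _ _
    have e2 : J (k + 1)
        = ∫ x in (-1 : ℝ)..1, iteratedDeriv (k + 1) u x * iteratedDeriv (2 * r - (k + 1)) u x := by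
      rw [hJ]
      exact integral_congr fun x _ => mul_comm _ _
    rw [e1, e2, hibp, neg_neg]
  have hpow : ∀ k, k ≤ r → J k = (-1 : ℝ) ^ k * J 0 := by
    intro k
    induction k with
    | zero => simp
    | succ n ih =>
      intro hk
      rw [hstep n (by omega), ih (by omega), pow_succ]
      ring
  -- extend the ODE to the closed interval by continuity
  have hodeIcc : ∀ x ∈ Icc (-1 : ℝ) 1,
      (-1 : ℝ) ^ r * iteratedDeriv (2 * r) u x + lam * u x = 0 := by
    have hcl : closure (Ioo (-1 : ℝ) 1) = Icc (-1 : ℝ) 1 := closure_Ioo (by norm_num)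
    have hco : Continuous fun x => (-1 : ℝ) ^ r * iteratedDeriv (2 * r) u x + lam * u x :=
      (continuous_const.mul (hcont (2 * r) le_rfl)).add (continuous_const.mul hu.continuous)
    have hE : Set.EqOn (fun x => (-1 : ℝ) ^ r * iteratedDeriv (2 * r) u x + lam * u x)
        (fun _ => (0 : ℝ)) (Ioo (-1 : ℝ) 1) := fun x hx => hode x hx
    have := hE.closure hco continuous_const
    rw [hcl] at this
    exact this
  -- J r = ∫ (u^{(r)})²  and  J r = -λ ∫ u² ≤ 0
  have hJr : J r = ∫ x in (-1 : ℝ)..1, (iteratedDeriv r u x) ^ 2 := by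
    have h2 : 2 * r - r = r := by omega
    simp only [hJ, h2]
    exact integral_congr fun x _ => (sq _).symm
  have hJr2 : J r = - (lam * ∫ x in (-1 : ℝ)..1, (u x) ^ 2) := by
    rw [hpow r le_rfl]
    simp only [hJ]
    have h1 : (-1 : ℝ) ^ r * ∫ x in (-1 : ℝ)..1, iteratedDeriv (2 * r - 0) u x * iteratedDeriv 0 u x
        = ∫ x in (-1 : ℝ)..1, (-1 : ℝ) ^ r * (iteratedDeriv (2 * r) u x * u x) := by
      rw [← intervalIntegral.integral_const_mul]
      exact integral_congr fun x _ => by simp [iteratedDeriv_zero]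
    rw [h1, ← intervalIntegral.integral_const_mul]
    rw [show (∫ x in (-1 : ℝ)..1, lam * u x ^ 2) = ∫ x in (-1 : ℝ)..1, lam * u x ^ 2 from rfl]
    rw [← intervalIntegral.integral_neg]
    apply integral_congr
    intro x hx
    have hx' : x ∈ Icc (-1 : ℝ) 1 := by
      have : uIcc (-1 : ℝ) 1 = Icc (-1 : ℝ) 1 := uIcc_of_le (by norm_num)
      rwa [this] at hx
    have h := hodeIcc x hx'
    have h2 : (-1 : ℝ) ^ r * iteratedDeriv (2 * r) u x = - (lam * u x) := by linarith
    calc (-1 : ℝ) ^ r * (iteratedDeriv (2 * r) u x * u x)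
        = ((-1 : ℝ) ^ r * iteratedDeriv (2 * r) u x) * u x := by ring
      _ = - (lam * u x) * u x := by rw [h2]
      _ = - (lam * u x ^ 2) := by ring
  have hge : 0 ≤ J r := by
    rw [hJr]
    exact intervalIntegral.integral_nonneg (by norm_num) fun x _ => sq_nonneg _
  have hle : J r ≤ 0 := by
    rw [hJr2, neg_nonpos]
    exact mul_nonneg hlam (intervalIntegral.integral_nonneg (by norm_num) fun x _ => sq_nonneg _)
  have hint0 : ∫ x in (-1 : ℝ)..1, (iteratedDeriv r u x) ^ 2 = 0 := by
    rw [← hJr]; exact le_antisymm hle hge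
  -- deduce u^{(r)} = 0 on [-1,1]
  have hae : (fun x => (iteratedDeriv r u x) ^ 2) =ᵐ[volume.restrict (Ioc (-1 : ℝ) 1)] 0 :=
    (integral_eq_zero_iff_of_le_of_nonneg_ae (by norm_num)
      (Filter.Eventually.of_forall fun x => sq_nonneg _)
      (((hcont r (by omega)).pow 2).intervalIntegrable _ _)).mp hint0
  have hrestr : volume.restrict (Ioc (-1 : ℝ) 1) = volume.restrict (Icc (-1 : ℝ) 1) :=
    Measure.restrict_congr_set Ioc_ae_eq_Icc
  rw [hrestr] at hae
  have heq0 : Set.EqOn (fun x => (iteratedDeriv r u x) ^ 2) 0 (Icc (-1 : ℝ) 1) :=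
    Measure.eqOn_of_ae_eq hae ((hcont r (by omega)).pow 2).continuousOn continuousOn_const
      (by rw [interior_Icc, closure_Ioo (by norm_num : (-1 : ℝ) ≠ 1)])
  have gr0 : ∀ x ∈ Icc (-1 : ℝ) 1, iteratedDeriv r u x = 0 := by
    intro x hx
    have := heq0 hx
    simpa using pow_eq_zero_iff (n := 2) (by norm_num) |>.mp this
  -- descend: u^{(r-k)} = 0 on [-1,1] for all k ≤ r
  have hdesc : ∀ k, k ≤ r → ∀ x ∈ Icc (-1 : ℝ) 1, iteratedDeriv (r - k) u x = 0 := by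
    intro k
    induction k with
    | zero => intro _; simpa using gr0
    | succ n ih =>
      intro hk x hx
      have hn := ih (by omega)
      have key : ∀ y ∈ Icc (-1 : ℝ) 1,
          iteratedDeriv (r - (n + 1)) u y = iteratedDeriv (r - (n + 1)) u (-1) := by
        apply constant_of_has_deriv_right_zero ((hcont _ (by omega)).continuousOn)
        intro y hy
        have hd := hder (r - (n + 1)) (by omega) y
        have h0 : iteratedDeriv (r - (n + 1) + 1) u y = 0 := by
          have he : r - (n + 1) + 1 = r - n := by omega
          rw [he]
          exact hn y (Ico_subset_Icc_self hy)
        rw [h0] at hd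
        exact hd.hasDerivWithinAt
      have hb := (hbc (r - (n + 1)) (by omega)).1
      rw [key x hx, hb]
  intro x hx
  have := hdesc r le_rfl x hx
  simpa [iteratedDeriv_zero] using this
end

section
/- Let φ be a nonzero C^4 function on [-1,1] satisfying φ'''' = λ φ on (-1,1) with λ > 0 and φ(-1) = φ(1) = φ'(-1) = φ'(1) = 0. Then for every t ∈ (-1,1), (φ''(-1))² = (φ''(t₀))² + λ (φ(t₀))² whenever φ'''(t₀) = 0; consequently the maximum of |φ''| over [-1,1] is attained at the endpoint -1 (and by symmetry at 1). -/
/-!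
The quantity `E = (φ'')² - 2 φ' φ''' + λ φ²` satisfies `E' = 2 φ' (λ φ - φ'''')`, so it is constant
on `[-1, 1]`, equal to `E(-1) = φ''(-1)²`. Wherever `φ' φ''' = 0` it reduces to `(φ'')² + λ φ²`,
which gives the identity. A maximiser of `(φ'')²` on `[-1, 1]` is either an endpoint (where
`φ' = 0`) or an interior critical point (where `φ'' φ''' = 0`), so there `(φ'')² ≤ E = φ''(-1)²`.
-/

open Set Topology

theorem ContDiff.hasDerivAt_iteratedDeriv {𝕜 F : Type*} [NontriviallyNormedField 𝕜]
    [NormedAddCommGroup F] [NormedSpace 𝕜 F] {f : 𝕜 → F} {n : WithTop ℕ∞} {k : ℕ}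
    (hf : ContDiff 𝕜 n f) (hk : k < n) (x : 𝕜) :
    HasDerivAt (iteratedDeriv k f) (iteratedDeriv (k + 1) f x) x := by
  rw [iteratedDeriv_succ]
  exact (hf.differentiable_iteratedDeriv k hk x).hasDerivAt

/-- The first integral of `φ'''' = λ φ` obtained by multiplying the equation by `φ'`. -/
noncomputable def energy (lam : ℝ) (φ : ℝ → ℝ) (x : ℝ) : ℝ :=
  iteratedDeriv 2 φ x ^ 2 - 2 * deriv φ x * iteratedDeriv 3 φ x + lam * φ x ^ 2

section Energy

variable {lam : ℝ} {φ : ℝ → ℝ}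

theorem hasDerivAt_energy (hφ : ContDiff ℝ 4 φ) (x : ℝ) :
    HasDerivAt (energy lam φ) (2 * deriv φ x * (lam * φ x - iteratedDeriv 4 φ x)) x := by
  have h0 : HasDerivAt φ (deriv φ x) x := (hφ.differentiable (by norm_num) x).hasDerivAt
  have h1 := hφ.hasDerivAt_iteratedDeriv (k := 1) (by norm_num) x
  have h2 := hφ.hasDerivAt_iteratedDeriv (k := 2) (by norm_num) x
  have h3 := hφ.hasDerivAt_iteratedDeriv (k := 3) (by norm_num) x
  rw [iteratedDeriv_one] at h1
  refine (((h2.fun_pow 2).fun_sub ((h1.const_mul 2).fun_mul h3)).fun_add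
    ((h0.fun_pow 2).const_mul lam)).congr_deriv ?_
  norm_num
  ring

theorem continuous_energy (hφ : ContDiff ℝ 4 φ) : Continuous (energy lam φ) :=
  continuous_iff_continuousAt.2 fun x => (hasDerivAt_energy hφ x).continuousAt

theorem energy_eq_of_mem_Icc {a b : ℝ} (hφ : ContDiff ℝ 4 φ)
    (hode : ∀ x ∈ Ioo a b, iteratedDeriv 4 φ x = lam * φ x) {x : ℝ} (hx : x ∈ Icc a b) :
    energy lam φ x = energy lam φ a := by
  rcases hx.1.eq_or_lt with rfl | hax
  · rfl
  obtain ⟨c, hc, hslope⟩ := exists_hasDerivAt_eq_slope (energy lam φ) _ hax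
    (continuous_energy hφ).continuousOn fun y _ => hasDerivAt_energy hφ y
  rw [hode c ⟨hc.1, hc.2.trans_le hx.2⟩, sub_self, mul_zero, eq_comm, div_eq_zero_iff] at hslope
  rcases hslope with h | h <;> linarith

theorem energy_of_mul_eq_zero {x : ℝ} (h : deriv φ x * iteratedDeriv 3 φ x = 0) :
    energy lam φ x = iteratedDeriv 2 φ x ^ 2 + lam * φ x ^ 2 := by
  unfold energy
  linear_combination -2 * h

end Energy

theorem mul_deriv_eq_zero_of_isMaxOn_sq {f : ℝ → ℝ} {s : Set ℝ} {c : ℝ} (hs : s ∈ 𝓝 c)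
    (hf : DifferentiableAt ℝ f c) (hmax : IsMaxOn (fun x => f x ^ 2) s c) :
    f c * deriv f c = 0 := by
  simpa using (hmax.isLocalMax hs).hasDerivAt_eq_zero (hf.hasDerivAt.pow 2)

theorem stmt_5_general (lam : ℝ) (hlam : 0 < lam) (φ : ℝ → ℝ)
    (hφ : ContDiff ℝ (4 : ℕ∞) φ)
    (hode : ∀ x ∈ Ioo (-1 : ℝ) 1, iteratedDeriv 4 φ x = lam * φ x)
    (hb0 : φ (-1) = 0)
    (hb1 : deriv φ (-1) = 0) (hb1' : deriv φ 1 = 0) :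
    (∀ t₀ ∈ Ioo (-1 : ℝ) 1, iteratedDeriv 3 φ t₀ = 0 →
      (iteratedDeriv 2 φ (-1)) ^ 2 = (iteratedDeriv 2 φ t₀) ^ 2 + lam * (φ t₀) ^ 2) ∧
    (∀ t ∈ Icc (-1 : ℝ) 1, |iteratedDeriv 2 φ t| ≤ |iteratedDeriv 2 φ (-1)|) := by
  have hE : ∀ t ∈ Icc (-1 : ℝ) 1, energy lam φ t = iteratedDeriv 2 φ (-1) ^ 2 := by
    intro t ht
    rw [energy_eq_of_mem_Icc hφ hode ht, energy_of_mul_eq_zero (by simp [hb1]), hb0]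
    ring
  refine ⟨fun t₀ ht₀ h3 => ?_, fun t ht => ?_⟩
  · rw [← hE t₀ (Ioo_subset_Icc_self ht₀), energy_of_mul_eq_zero (by simp [h3])]
  obtain ⟨c, hc, hmax⟩ : ∃ c ∈ Icc (-1 : ℝ) 1,
      IsMaxOn (fun x => iteratedDeriv 2 φ x ^ 2) (Icc (-1) 1) c :=
    isCompact_Icc.exists_isMaxOn (nonempty_Icc.2 (by norm_num))
      ((hφ.continuous_iteratedDeriv 2 (by norm_num)).pow 2).continuousOn
  have hcrit : iteratedDeriv 2 φ c = 0 ∨ deriv φ c * iteratedDeriv 3 φ c = 0 := by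
    rcases hc.1.eq_or_lt with rfl | hc₁
    · simp [hb1]
    rcases hc.2.eq_or_lt with rfl | hc₂
    · simp [hb1']
    have h := mul_deriv_eq_zero_of_isMaxOn_sq (Icc_mem_nhds hc₁ hc₂)
      (hφ.differentiable_iteratedDeriv 2 (by norm_num) c) hmax
    rw [← iteratedDeriv_succ] at h
    rcases mul_eq_zero.1 h with h | h
    · exact .inl h
    · exact .inr (by simp [h])
  rw [← sq_le_sq]
  refine (hmax ht).trans ?_
  rcases hcrit with h | h
  · simp [h]; positivity
  · rw [← hE c hc, energy_of_mul_eq_zero h]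
    nlinarith [sq_nonneg (φ c)]

/-- For a nonzero `C⁴` solution of `φ'''' = λφ` on `(-1,1)` with `λ > 0` and
`φ(±1) = φ'(±1) = 0`: at any interior critical point `t₀` of `φ''` one has
`(φ''(-1))² = (φ''(t₀))² + λ (φ(t₀))²`; consequently `|φ''|` attains its maximum
over `[-1,1]` at `-1`. -/
theorem stmt_5 (lam : ℝ) (hlam : 0 < lam) (φ : ℝ → ℝ)
    (hφ : ContDiff ℝ (4 : ℕ∞) φ)
    (hode : ∀ x ∈ Ioo (-1 : ℝ) 1, iteratedDeriv 4 φ x = lam * φ x)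
    (hb0 : φ (-1) = 0) (hb0' : φ 1 = 0)
    (hb1 : deriv φ (-1) = 0) (hb1' : deriv φ 1 = 0)
    (hne : ∃ x ∈ Icc (-1 : ℝ) 1, φ x ≠ 0) :
    (∀ t₀ ∈ Ioo (-1 : ℝ) 1, iteratedDeriv 3 φ t₀ = 0 →
      (iteratedDeriv 2 φ (-1)) ^ 2 = (iteratedDeriv 2 φ t₀) ^ 2 + lam * (φ t₀) ^ 2) ∧
    (∀ t ∈ Icc (-1 : ℝ) 1, |iteratedDeriv 2 φ t| ≤ |iteratedDeriv 2 φ (-1)|) :=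
  stmt_5_general lam hlam φ hφ hode hb0 hb1 hb1'
end

section
/- Let r ∈ ℕ, r ≥ 1, k ∈ ℤ with 0 ≤ k ≤ r-1, λ ≥ 0, and let u be as in the boundary value problem (-1)^r u^{(2r)} + λu = 0 on (-1,1) with u^{(s)}(-1) = (-1)^{k-1}δ_{r-k-1,s}, u^{(s)}(1) = 0 for s = 0,...,r-1. Then for every f with f^{(r-1)} absolutely continuous and f^{(r)} ∈ L², |f^{(k)}(-1)| ≤ ‖u^{(r)}‖_{L²} ‖f‖_{L²} + ‖u‖_{L²} ‖f^{(r)}‖_{L²}. -/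
/-!
Integrating by parts `r` times gives
`∫ u f⁽ʳ⁾ = Σ_{j<r} (-1)^j [u⁽ʲ⁾ f⁽ʳ⁻¹⁻ʲ⁾]₋₁¹ + (-1)^r ∫ u⁽ʳ⁾ f`.
The boundary conditions on `u` kill every boundary term except the one at `x = -1` with
`j = r - k - 1`, which is `±f⁽ᵏ⁾(-1)`. Hence
`f⁽ᵏ⁾(-1) = ∫ u⁽ʳ⁾ f - (-1)^r ∫ u f⁽ʳ⁾`, and Cauchy–Schwarz bounds both integrals.
-/

open Set intervalIntegral

theorem sq_integral_mul_le_integral_sq_mul_integral_sq {a b : ℝ} (hab : a ≤ b) {g h : ℝ → ℝ}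
    (hg : Continuous g) (hh : Continuous h) :
    (∫ x in a..b, g x * h x) ^ 2 ≤ (∫ x in a..b, g x ^ 2) * ∫ x in a..b, h x ^ 2 := by
  set A := ∫ x in a..b, g x ^ 2
  set B := ∫ x in a..b, g x * h x
  set C := ∫ x in a..b, h x ^ 2
  have hquad : ∀ t : ℝ, 0 ≤ C * (t * t) + 2 * B * t + A := by
    intro t
    have hexpand : ∫ x in a..b, (g x + t * h x) ^ 2 = A + 2 * t * B + t * t * C := by
      have hpt : ∀ x, (g x + t * h x) ^ 2 = g x ^ 2 + 2 * t * (g x * h x) + t * t * h x ^ 2 :=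
        fun x => by ring
      simp_rw [hpt]
      rw [integral_add, integral_add, integral_const_mul, integral_const_mul]
      all_goals exact Continuous.intervalIntegrable (by fun_prop) _ _
    have : 0 ≤ ∫ x in a..b, (g x + t * h x) ^ 2 := integral_nonneg hab fun x _ => sq_nonneg _
    linarith
  have := discrim_le_zero hquad
  rw [discrim] at this
  nlinarith

theorem abs_integral_mul_le_sqrt_mul_sqrt {a b : ℝ} (hab : a ≤ b) {g h : ℝ → ℝ}
    (hg : Continuous g) (hh : Continuous h) :
    |∫ x in a..b, g x * h x| ≤ √(∫ x in a..b, g x ^ 2) * √(∫ x in a..b, h x ^ 2) := by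
  rw [← Real.sqrt_mul (integral_nonneg hab fun x _ => sq_nonneg (g x)), ← Real.sqrt_sq_eq_abs]
  exact Real.sqrt_le_sqrt (sq_integral_mul_le_integral_sq_mul_integral_sq hab hg hh)

theorem integral_mul_iteratedDeriv_eq (a b : ℝ) (n : ℕ) {u f : ℝ → ℝ}
    (hu : ContDiff ℝ n u) (hf : ContDiff ℝ n f) :
    ∫ x in a..b, u x * iteratedDeriv n f x
      = (∑ j ∈ Finset.range n, (-1 : ℝ) ^ j *
          (iteratedDeriv j u b * iteratedDeriv (n - 1 - j) f b
            - iteratedDeriv j u a * iteratedDeriv (n - 1 - j) f a))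
        + (-1 : ℝ) ^ n * ∫ x in a..b, iteratedDeriv n u x * f x := by
  induction n generalizing u with
  | zero => simp
  | succ n ih =>
    have hu' : ContDiff ℝ n (deriv u) := (contDiff_succ_iff_deriv.mp hu).2.2
    have hparts : ∫ x in a..b, u x * iteratedDeriv (n + 1) f x
        = u b * iteratedDeriv n f b - u a * iteratedDeriv n f a
          - ∫ x in a..b, deriv u x * iteratedDeriv n f x := by
      refine integral_mul_deriv_eq_deriv_mul (fun x _ => ?_) (fun x _ => ?_) ?_ ?_
      · exact (hu.differentiable (by simp) x).hasDerivAt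
      · rw [iteratedDeriv_succ]
        exact (hf.differentiable_iteratedDeriv n (by norm_cast; omega) x).hasDerivAt
      · exact hu'.continuous.intervalIntegrable _ _
      · exact (hf.continuous_iteratedDeriv _ le_rfl).intervalIntegrable _ _
    rw [hparts, ih hu' (hf.of_le (by norm_cast; omega)), Finset.sum_range_succ']
    simp only [← iteratedDeriv_succ', pow_succ, iteratedDeriv_zero, Nat.add_sub_cancel,
      Nat.sub_zero, Nat.sub_sub, add_comm 1, pow_zero, one_mul, mul_neg_one, neg_mul,
      Finset.sum_neg_distrib]
    ring

theorem iteratedDeriv_eq_integral_sub_integral_of_boundary (a b : ℝ) {r k : ℕ} (hk : k < r)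
    {u f : ℝ → ℝ} (hu : ContDiff ℝ r u) (hf : ContDiff ℝ r f)
    (hbcl : ∀ s < r, iteratedDeriv s u a = (-1 : ℝ) ^ (k + 1) * (if r - k - 1 = s then 1 else 0))
    (hbcr : ∀ s < r, iteratedDeriv s u b = 0) :
    iteratedDeriv k f a
      = (∫ x in a..b, iteratedDeriv r u x * f x)
        - (-1 : ℝ) ^ r * ∫ x in a..b, u x * iteratedDeriv r f x := by
  have hboundary : ∀ j ∈ Finset.range r, (-1 : ℝ) ^ j *
      (iteratedDeriv j u b * iteratedDeriv (r - 1 - j) f b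
        - iteratedDeriv j u a * iteratedDeriv (r - 1 - j) f a)
      = if r - k - 1 = j then -(-1 : ℝ) ^ r * iteratedDeriv k f a else 0 := by
    intro j hj
    rw [Finset.mem_range] at hj
    rw [hbcr j hj, hbcl j hj]
    split_ifs with hjk
    · subst hjk
      rw [show r - 1 - (r - k - 1) = k by omega,
        show (-1 : ℝ) ^ r = (-1) ^ (r - k - 1) * (-1) ^ (k + 1) by rw [← pow_add]; congr 1; omega]
      ring
    · ring
  have hsign : (-1 : ℝ) ^ r * (-1 : ℝ) ^ r = 1 := by rw [← mul_pow]; norm_num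
  have hparts := integral_mul_iteratedDeriv_eq a b r hu hf
  rw [Finset.sum_congr rfl hboundary, Finset.sum_ite_eq, if_pos (by simp; omega)] at hparts
  linear_combination (-1 : ℝ) ^ r * hparts
    + ((∫ x in a..b, iteratedDeriv r u x * f x) - iteratedDeriv k f a) * hsign

theorem stmt_9_general (r k : ℕ) (hr : 1 ≤ r) (hk : k ≤ r - 1)
    (u : ℝ → ℝ) (hu : ContDiff ℝ ((2 * r : ℕ) : ℕ∞) u)
    (hbcl : ∀ s < r, iteratedDeriv s u (-1) = (-1 : ℝ) ^ (k + 1) * (if r - k - 1 = s then 1 else 0))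
    (hbcr : ∀ s < r, iteratedDeriv s u 1 = 0)
    (f : ℝ → ℝ) (hf : ContDiff ℝ (r : ℕ∞) f) :
    |iteratedDeriv k f (-1)|
      ≤ Real.sqrt (∫ x in (-1 : ℝ)..1, (iteratedDeriv r u x) ^ 2) *
          Real.sqrt (∫ x in (-1 : ℝ)..1, (f x) ^ 2)
        + Real.sqrt (∫ x in (-1 : ℝ)..1, (u x) ^ 2) *
          Real.sqrt (∫ x in (-1 : ℝ)..1, (iteratedDeriv r f x) ^ 2) := by
  have hur : ContDiff ℝ r u := hu.of_le (by norm_cast; omega)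
  have hle : (-1 : ℝ) ≤ 1 := by norm_num
  rw [iteratedDeriv_eq_integral_sub_integral_of_boundary (-1) 1 (by omega) hur hf hbcl hbcr]
  calc _ ≤ |∫ x in (-1 : ℝ)..1, iteratedDeriv r u x * f x|
        + |(-1 : ℝ) ^ r * ∫ x in (-1 : ℝ)..1, u x * iteratedDeriv r f x| := abs_sub _ _
    _ = |∫ x in (-1 : ℝ)..1, iteratedDeriv r u x * f x|
        + |∫ x in (-1 : ℝ)..1, u x * iteratedDeriv r f x| := by
          rw [abs_mul, abs_neg_one_pow, one_mul]
    _ ≤ _ := add_le_add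
      (abs_integral_mul_le_sqrt_mul_sqrt hle (hur.continuous_iteratedDeriv r le_rfl) hf.continuous)
      (abs_integral_mul_le_sqrt_mul_sqrt hle hur.continuous (hf.continuous_iteratedDeriv r le_rfl))

/-- Pointwise Landau–Kolmogorov inequality at `t = -1`: with `u` solving the boundary value
problem `(-1)^r u^{(2r)} + λu = 0`, `u^{(s)}(-1) = (-1)^{k-1} δ_{r-k-1,s}`, `u^{(s)}(1) = 0`,
one has `|f^{(k)}(-1)| ≤ ‖u^{(r)}‖₂ ‖f‖₂ + ‖u‖₂ ‖f^{(r)}‖₂`. -/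
theorem stmt_9 (r k : ℕ) (hr : 1 ≤ r) (hk : k ≤ r - 1) (lam : ℝ) (hlam : 0 ≤ lam)
    (u : ℝ → ℝ) (hu : ContDiff ℝ ((2 * r : ℕ) : ℕ∞) u)
    (hode : ∀ x ∈ Ioo (-1 : ℝ) 1, (-1 : ℝ) ^ r * iteratedDeriv (2 * r) u x + lam * u x = 0)
    (hbcl : ∀ s < r, iteratedDeriv s u (-1) = (-1 : ℝ) ^ (k + 1) * (if r - k - 1 = s then 1 else 0))
    (hbcr : ∀ s < r, iteratedDeriv s u 1 = 0)
    (f : ℝ → ℝ) (hf : ContDiff ℝ (r : ℕ∞) f) :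
    |iteratedDeriv k f (-1)|
      ≤ Real.sqrt (∫ x in (-1 : ℝ)..1, (iteratedDeriv r u x) ^ 2) *
          Real.sqrt (∫ x in (-1 : ℝ)..1, (f x) ^ 2)
        + Real.sqrt (∫ x in (-1 : ℝ)..1, (u x) ^ 2) *
          Real.sqrt (∫ x in (-1 : ℝ)..1, (iteratedDeriv r f x) ^ 2) :=
  stmt_9_general r k hr hk u hu hbcl hbcr f hf
end

section
/- Let λ > 0 and u be a C^{2r} function on [-1,1] satisfying (-1)^r u^{(2r)} + λ u = 0 on (-1,1) with u^{(s)}(-1) = (-1)^{k-1}δ_{r-k-1,s}, u^{(s)}(1) = 0 for s = 0,...,r-1, where 0 ≤ k ≤ r-1. Set f = u^{(r)}. Then f^{(k)}(-1) = ‖u^{(r)}‖²_{L²} + λ‖u‖²_{L²} = ‖u^{(r)}‖_{L²}‖f‖_{L²} + ‖u‖_{L²}‖f^{(r)}‖_{L²}; i.e., f is extremal in the pointwise Landau–Kolmogorov inequality. -/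
/-!
Lagrange's identity for `(-1)^r D^{2r}`: the boundary form
`W = ∑_{j<r} (-1)^j u^{(r+j)} u^{(r-1-j)}` has the telescoping derivative
`W' = (u^{(r)})² - (-1)^r u^{(2r)} u`, which the equation turns into `(u^{(r)})² + λ u²`.
Integrating over `[-1, 1]`, the conditions at `1` kill `W 1`, and those at `-1` leave the single
term `W (-1) = -u^{(r+k)}(-1) = -f^{(k)}(-1)`. The second equality is the first rewritten with
`‖f^{(r)}‖ = ‖u^{(2r)}‖ = λ‖u‖`.
-/

open Set intervalIntegral

theorem iteratedDeriv_iteratedDeriv {𝕜 F : Type*} [NontriviallyNormedField 𝕜]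
    [NormedAddCommGroup F] [NormedSpace 𝕜 F] (m n : ℕ) (f : 𝕜 → F) :
    iteratedDeriv m (iteratedDeriv n f) = iteratedDeriv (m + n) f := by
  simp only [iteratedDeriv_eq_iterate, ← Function.iterate_add_apply]

theorem neg_one_pow_mul_self (n : ℕ) : (-1 : ℝ) ^ n * (-1) ^ n = 1 := by
  rw [← mul_pow]; norm_num

noncomputable def boundaryForm (r : ℕ) (u : ℝ → ℝ) (x : ℝ) : ℝ :=
  ∑ j ∈ Finset.range r, (-1) ^ j * (iteratedDeriv (r + j) u x * iteratedDeriv (r - 1 - j) u x)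

section BoundaryForm

variable {r : ℕ} {u : ℝ → ℝ}

theorem hasDerivAt_boundaryForm (hu : ContDiff ℝ ((2 * r : ℕ) : ℕ∞) u) (x : ℝ) :
    HasDerivAt (boundaryForm r u)
      (iteratedDeriv r u x ^ 2 - (-1) ^ r * iteratedDeriv (2 * r) u x * u x) x := by
  have hder : ∀ m < 2 * r, HasDerivAt (iteratedDeriv m u) (iteratedDeriv (m + 1) u x) x :=
    fun m hm => by
      rw [iteratedDeriv_succ]
      exact (hu.differentiable_iteratedDeriv m (by exact_mod_cast hm) x).hasDerivAt
  set T : ℕ → ℝ := fun j => (-1) ^ j * (iteratedDeriv (r + j) u x * iteratedDeriv (r - j) u x)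
  have hterm : ∀ j ∈ Finset.range r, HasDerivAt
      (fun y => (-1) ^ j * (iteratedDeriv (r + j) u y * iteratedDeriv (r - 1 - j) u y))
      (T j - T (j + 1)) x := fun j hj => by
    have hjr := Finset.mem_range.mp hj
    have hlow := hder (r - 1 - j) (by omega)
    rw [show r - 1 - j + 1 = r - j by omega] at hlow
    refine (((hder (r + j) (by omega)).mul hlow).const_mul _).congr_deriv ?_
    simp only [T, show r - (j + 1) = r - 1 - j by omega, pow_succ, ← add_assoc]
    ring
  refine (HasDerivAt.fun_sum hterm).congr_deriv ?_
  rw [Finset.sum_range_sub']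
  simp only [T, add_zero, Nat.sub_zero, pow_zero, one_mul, Nat.sub_self, iteratedDeriv_zero,
    ← two_mul]
  ring

theorem boundaryForm_sub_eq_integral (hu : ContDiff ℝ ((2 * r : ℕ) : ℕ∞) u) (a b : ℝ) :
    boundaryForm r u b - boundaryForm r u a
      = ∫ x in a..b, (iteratedDeriv r u x ^ 2 - (-1) ^ r * iteratedDeriv (2 * r) u x * u x) := by
  have hcont : ∀ m ≤ 2 * r, Continuous (iteratedDeriv m u) := fun m hm =>
    hu.continuous_iteratedDeriv m (by exact_mod_cast hm)
  refine (integral_eq_sub_of_hasDerivAt (fun x _ => hasDerivAt_boundaryForm hu x) ?_).symm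
  exact (((hcont r (by omega)).pow 2).sub
    ((continuous_const.mul (hcont (2 * r) le_rfl)).mul hu.continuous)).intervalIntegrable _ _

theorem boundaryForm_eq_zero {x : ℝ} (h : ∀ s < r, iteratedDeriv s u x = 0) :
    boundaryForm r u x = 0 :=
  Finset.sum_eq_zero fun j hj => by
    rw [h (r - 1 - j) (by have := Finset.mem_range.mp hj; omega), mul_zero, mul_zero]

theorem boundaryForm_eq_neg_iteratedDeriv {k : ℕ} {x : ℝ} (hkr : k < r)
    (h : ∀ s < r, iteratedDeriv s u x = (-1 : ℝ) ^ (k + 1) * (if r - k - 1 = s then 1 else 0)) :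
    boundaryForm r u x = -iteratedDeriv (r + k) u x := by
  rw [boundaryForm, Finset.sum_eq_single_of_mem k (Finset.mem_range.mpr hkr)]
  · rw [h (r - 1 - k) (by omega), if_pos (by omega), pow_succ]
    linear_combination (-iteratedDeriv (r + k) u x) * neg_one_pow_mul_self k
  · intro j hj hjk
    have hjr := Finset.mem_range.mp hj
    rw [h (r - 1 - j) (by omega), if_neg (by omega), mul_zero, mul_zero, mul_zero]

end BoundaryForm

section Energy

variable {r : ℕ} {lam a b : ℝ} {u : ℝ → ℝ}

theorem integral_energy_eq_boundaryForm_sub (hu : ContDiff ℝ ((2 * r : ℕ) : ℕ∞) u)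
    (hab : a ≤ b)
    (hode : ∀ x ∈ Icc a b, (-1 : ℝ) ^ r * iteratedDeriv (2 * r) u x + lam * u x = 0) :
    (∫ x in a..b, iteratedDeriv r u x ^ 2) + lam * ∫ x in a..b, u x ^ 2
      = boundaryForm r u b - boundaryForm r u a := by
  have hcont : Continuous (iteratedDeriv r u) :=
    hu.continuous_iteratedDeriv r (by exact_mod_cast (by omega : r ≤ 2 * r))
  have hint₁ : IntervalIntegrable (fun x => iteratedDeriv r u x ^ 2) MeasureTheory.volume a b :=
    (hcont.pow 2).intervalIntegrable _ _
  have hint₂ : IntervalIntegrable (fun x => lam * u x ^ 2) MeasureTheory.volume a b :=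
    (continuous_const.mul (hu.continuous.pow 2)).intervalIntegrable _ _
  rw [boundaryForm_sub_eq_integral hu, ← integral_const_mul, ← integral_add hint₁ hint₂]
  refine integral_congr fun x hx => ?_
  rw [uIcc_of_le hab] at hx
  linear_combination u x * hode x hx

theorem integral_sq_iteratedDeriv_two_mul_eq (hab : a ≤ b)
    (hode : ∀ x ∈ Icc a b, (-1 : ℝ) ^ r * iteratedDeriv (2 * r) u x + lam * u x = 0) :
    ∫ x in a..b, iteratedDeriv (2 * r) u x ^ 2 = lam ^ 2 * ∫ x in a..b, u x ^ 2 := by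
  rw [← integral_const_mul]
  refine integral_congr fun x hx => ?_
  rw [uIcc_of_le hab] at hx
  linear_combination ((-1) ^ r * iteratedDeriv (2 * r) u x - lam * u x) * hode x hx
    - iteratedDeriv (2 * r) u x ^ 2 * neg_one_pow_mul_self r

end Energy

/-- Extremality of `f = u^{(r)}` in the pointwise Landau–Kolmogorov inequality:
`f^{(k)}(-1) = ‖u^{(r)}‖₂² + λ‖u‖₂² = ‖u^{(r)}‖₂‖f‖₂ + ‖u‖₂‖f^{(r)}‖₂`. -/
theorem stmt_10 (r k : ℕ) (hr : 1 ≤ r) (hk : k ≤ r - 1) (lam : ℝ) (hlam : 0 < lam)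
    (u : ℝ → ℝ) (hu : ContDiff ℝ ((2 * r : ℕ) : ℕ∞) u)
    (hode : ∀ x ∈ Ioo (-1 : ℝ) 1, (-1 : ℝ) ^ r * iteratedDeriv (2 * r) u x + lam * u x = 0)
    (hbcl : ∀ s < r, iteratedDeriv s u (-1) = (-1 : ℝ) ^ (k + 1) * (if r - k - 1 = s then 1 else 0))
    (hbcr : ∀ s < r, iteratedDeriv s u 1 = 0) :
    iteratedDeriv k (iteratedDeriv r u) (-1)
        = (∫ x in (-1 : ℝ)..1, (iteratedDeriv r u x) ^ 2)
          + lam * ∫ x in (-1 : ℝ)..1, (u x) ^ 2 ∧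
    iteratedDeriv k (iteratedDeriv r u) (-1)
        = Real.sqrt (∫ x in (-1 : ℝ)..1, (iteratedDeriv r u x) ^ 2) *
            Real.sqrt (∫ x in (-1 : ℝ)..1, (iteratedDeriv r u x) ^ 2)
          + Real.sqrt (∫ x in (-1 : ℝ)..1, (u x) ^ 2) *
            Real.sqrt (∫ x in (-1 : ℝ)..1, (iteratedDeriv r (iteratedDeriv r u) x) ^ 2) := by
  have hodeIcc : ∀ x ∈ Icc (-1 : ℝ) 1,
      (-1 : ℝ) ^ r * iteratedDeriv (2 * r) u x + lam * u x = 0 := by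
    rw [← closure_Ioo (by norm_num : (-1 : ℝ) ≠ 1)]
    exact EqOn.closure hode
      ((continuous_const.mul (hu.continuous_iteratedDeriv _ le_rfl)).add
        (continuous_const.mul hu.continuous)) continuous_const
  have hone : (-1 : ℝ) ≤ 1 := by norm_num
  have energy : iteratedDeriv k (iteratedDeriv r u) (-1)
      = (∫ x in (-1 : ℝ)..1, iteratedDeriv r u x ^ 2) + lam * ∫ x in (-1 : ℝ)..1, u x ^ 2 := by
    rw [integral_energy_eq_boundaryForm_sub hu hone hodeIcc, boundaryForm_eq_zero hbcr,
      boundaryForm_eq_neg_iteratedDeriv (by omega) hbcl, iteratedDeriv_iteratedDeriv, add_comm,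
      zero_sub, neg_neg]
  refine ⟨energy, ?_⟩
  rw [energy, iteratedDeriv_iteratedDeriv, ← two_mul,
    integral_sq_iteratedDeriv_two_mul_eq hone hodeIcc, Real.sqrt_mul (sq_nonneg lam),
    Real.sqrt_sq hlam.le, mul_left_comm,
    Real.mul_self_sqrt (integral_nonneg hone fun x _ => sq_nonneg _),
    Real.mul_self_sqrt (integral_nonneg hone fun x _ => sq_nonneg _)]
end

section
/- Let (λ_n)_{n≥1} be positive reals and (c_n)_{n≥1} nonnegative reals with Σ λ_n² c_n < ∞. Then the function f₂(λ) = (Σ_n λ_n c_n/(λ+λ_n)²) / (Σ_n λ_n² c_n/(λ+λ_n)²) is non-increasing in λ on (0,∞), provided the denominator is positive. -/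
set_option maxHeartbeats 1000000 in
lemma pair_ineq (a b x y p q : ℝ) (ha : 0 < a) (hab : a ≤ b) (hx : 0 < x) (hy : 0 < y)
    (hp : 0 ≤ p) (hq : 0 ≤ q) :
    x * p / (b + x) ^ 2 * (y ^ 2 * q / (a + y) ^ 2) +
      x ^ 2 * p / (a + x) ^ 2 * (y * q / (b + y) ^ 2) ≤
    x * p / (a + x) ^ 2 * (y ^ 2 * q / (b + y) ^ 2) +
      x ^ 2 * p / (b + x) ^ 2 * (y * q / (a + y) ^ 2) := by
  have hax : 0 < a + x := by linarith
  have hbx : 0 < b + x := by linarith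
  have hay : 0 < a + y := by linarith
  have hby : 0 < b + y := by linarith
  have e : (x * p / (a + x) ^ 2 * (y ^ 2 * q / (b + y) ^ 2) +
      x ^ 2 * p / (b + x) ^ 2 * (y * q / (a + y) ^ 2)) -
      (x * p / (b + x) ^ 2 * (y ^ 2 * q / (a + y) ^ 2) +
      x ^ 2 * p / (a + x) ^ 2 * (y * q / (b + y) ^ 2)) =
      (x * y * p * q * (b - a) * (y - x) ^ 2 * ((a + x) * (b + y) + (b + x) * (a + y))) /
        ((a + x) ^ 2 * (b + x) ^ 2 * (a + y) ^ 2 * (b + y) ^ 2) := by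
    field_simp
    ring
  have hnum : 0 ≤ x * y * p * q * (b - a) * (y - x) ^ 2 *
      ((a + x) * (b + y) + (b + x) * (a + y)) := by
    have h1 : (0:ℝ) ≤ b - a := by linarith
    have h2 : (0:ℝ) ≤ (a + x) * (b + y) + (b + x) * (a + y) := by nlinarith
    have := mul_nonneg (mul_nonneg (mul_nonneg (mul_nonneg (mul_nonneg
      (mul_nonneg hx.le hy.le) hp) hq) h1) (sq_nonneg (y - x))) h2
    linarith
  have hden : (0:ℝ) ≤ (a + x) ^ 2 * (b + x) ^ 2 * (a + y) ^ 2 * (b + y) ^ 2 := by positivity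
  linarith [div_nonneg hnum hden, e]

/-- With `λ_n > 0`, `c_n ≥ 0`, `Σ λ_n² c_n < ∞` and positive, the ratio
`f₂(λ) = (Σ λ_n c_n/(λ+λ_n)²)/(Σ λ_n² c_n/(λ+λ_n)²)` is non-increasing on `(0,∞)`. -/
theorem stmt_11 (l c : ℕ → ℝ) (hl : ∀ n, 0 < l n) (hc : ∀ n, 0 ≤ c n)
    (hsum : Summable fun n => (l n) ^ 2 * c n)
    (hpos : 0 < ∑' n, (l n) ^ 2 * c n) :
    ∀ a b : ℝ, 0 < a → a ≤ b →
      (∑' n, l n * c n / (b + l n) ^ 2) / (∑' n, (l n) ^ 2 * c n / (b + l n) ^ 2)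
        ≤ (∑' n, l n * c n / (a + l n) ^ 2) / (∑' n, (l n) ^ 2 * c n / (a + l n) ^ 2) := by
  intro a b ha hab
  have hb : 0 < b := lt_of_lt_of_le ha hab
  -- denominators
  set g : ℝ → ℕ → ℝ := fun lam n => (l n) ^ 2 * c n / (lam + l n) ^ 2 with hg
  set f : ℝ → ℕ → ℝ := fun lam n => l n * c n / (lam + l n) ^ 2 with hf
  have hgnn : ∀ lam, 0 < lam → ∀ n, 0 ≤ g lam n := fun lam hlam n => by
    have := hl n; have := hc n; positivity
  have hfnn : ∀ lam, 0 < lam → ∀ n, 0 ≤ f lam n := fun lam hlam n => by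
    have := hl n; have := hc n; positivity
  have hgsum : ∀ lam, 0 < lam → Summable (g lam) := by
    intro lam hlam
    apply Summable.of_nonneg_of_le (hgnn lam hlam) (f := fun n => lam⁻¹ ^ 2 * ((l n)^2 * c n))
    · intro n
      have h1 : lam ^ 2 ≤ (lam + l n) ^ 2 := by nlinarith [(hl n).le, hlam.le]
      rw [div_le_iff₀ (by nlinarith [hl n])]
      have := hc n; have := hl n
      rw [inv_pow]
      rw [mul_comm ((lam^2)⁻¹) _, mul_assoc]
      calc (l n)^2 * c n = (l n)^2 * c n * 1 := by ring
        _ ≤ l n ^ 2 * c n * ((lam ^ 2)⁻¹ * (lam + l n) ^ 2) := by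
            apply mul_le_mul_of_nonneg_left _ (by positivity)
            rw [le_inv_mul_iff₀ (by positivity), mul_one]; exact h1
    · exact hsum.mul_left _
  -- positivity of denominators
  obtain ⟨n0, hn0⟩ : ∃ n, 0 < (l n) ^ 2 * c n := by
    by_contra h
    push_neg at h
    have : ∀ n, (l n) ^ 2 * c n = 0 := fun n =>
      le_antisymm (h n) (by have := hl n; have := hc n; positivity)
    rw [tsum_congr (fun n => this n)] at hpos
    simp at hpos
  have hc0 : 0 < c n0 := by
    rcases lt_or_ge 0 (c n0) with h | h
    · exact h
    · exfalso; nlinarith [sq_nonneg (l n0)]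
  have hgpos : ∀ lam, 0 < lam → 0 < ∑' n, g lam n := by
    intro lam hlam
    refine Summable.tsum_pos (hgsum lam hlam) (hgnn lam hlam) n0 ?_
    have := hl n0; positivity
  -- case on summability of f a
  by_cases hfa : Summable (f a)
  · have hfb : Summable (f b) := by
      refine Summable.of_nonneg_of_le (hfnn b hb) (fun n => ?_) hfa
      apply div_le_div_of_nonneg_left (by have := hl n; have := hc n; positivity)
        (pow_pos (by have := hl n; linarith : (0:ℝ) < a + l n) 2)
      have := hl n
      nlinarith
    rw [div_le_div_iff₀ (hgpos b hb) (hgpos a ha)]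
    -- reduce to double sum
    have hFab : Summable (fun z : ℕ × ℕ => f b z.1 * g a z.2) :=
      hfb.mul_of_nonneg (hgsum a ha) (hfnn b hb) (hgnn a ha)
    have hFab' : Summable (fun z : ℕ × ℕ => g a z.1 * f b z.2) :=
      (hgsum a ha).mul_of_nonneg hfb (hgnn a ha) (hfnn b hb)
    have hGab : Summable (fun z : ℕ × ℕ => f a z.1 * g b z.2) :=
      hfa.mul_of_nonneg (hgsum b hb) (hfnn a ha) (hgnn b hb)
    have hGab' : Summable (fun z : ℕ × ℕ => g b z.1 * f a z.2) :=
      (hgsum b hb).mul_of_nonneg hfa (hgnn b hb) (hfnn a ha)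
    have prodsum : ∀ (u v : ℕ → ℝ), Summable (fun z : ℕ × ℕ => u z.1 * v z.2) →
        (∑' z : ℕ × ℕ, u z.1 * v z.2) = (∑' n, u n) * (∑' n, v n) := by
      intro u v h
      rw [Summable.tsum_prod h]
      simp_rw [tsum_mul_left, tsum_mul_right]
    have e1 : (∑' n, f b n) * (∑' n, g a n) = ∑' z : ℕ × ℕ, f b z.1 * g a z.2 :=
      (prodsum _ _ hFab).symm
    have e2 : (∑' n, f a n) * (∑' n, g b n) = ∑' z : ℕ × ℕ, f a z.1 * g b z.2 :=
      (prodsum _ _ hGab).symm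
    have e1' : (∑' z : ℕ × ℕ, f b z.1 * g a z.2) = ∑' z : ℕ × ℕ, g a z.1 * f b z.2 := by
      rw [← (Equiv.prodComm ℕ ℕ).tsum_eq (fun z : ℕ × ℕ => g a z.1 * f b z.2)]
      exact tsum_congr fun z => (mul_comm _ _)
    have e2' : (∑' z : ℕ × ℕ, f a z.1 * g b z.2) = ∑' z : ℕ × ℕ, g b z.1 * f a z.2 := by
      rw [← (Equiv.prodComm ℕ ℕ).tsum_eq (fun z : ℕ × ℕ => g b z.1 * f a z.2)]
      exact tsum_congr fun z => (mul_comm _ _)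
    have main : (∑' z : ℕ × ℕ, f b z.1 * g a z.2) + (∑' z : ℕ × ℕ, g a z.1 * f b z.2)
        ≤ (∑' z : ℕ × ℕ, f a z.1 * g b z.2) + (∑' z : ℕ × ℕ, g b z.1 * f a z.2) := by
      rw [← Summable.tsum_add hFab hFab', ← Summable.tsum_add hGab hGab']
      refine Summable.tsum_le_tsum (fun z => ?_) (hFab.add hFab') (hGab.add hGab')
      obtain ⟨n, m⟩ := z
      simp only [hf, hg]
      have h := pair_ineq a b (l n) (l m) (c n) (c m) ha hab (hl n) (hl m) (hc n) (hc m)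
      calc l n * c n / (b + l n) ^ 2 * ((l m)^2 * c m / (a + l m) ^ 2) +
            (l n)^2 * c n / (a + l n) ^ 2 * (l m * c m / (b + l m) ^ 2)
          ≤ l n * c n / (a + l n) ^ 2 * ((l m)^2 * c m / (b + l m) ^ 2) +
            (l n)^2 * c n / (b + l n) ^ 2 * (l m * c m / (a + l m) ^ 2) := h
        _ = _ := by ring
    calc (∑' n, f b n) * (∑' n, g a n) = ∑' z : ℕ × ℕ, f b z.1 * g a z.2 := e1
      _ ≤ ∑' z : ℕ × ℕ, f a z.1 * g b z.2 := by linarith [main, e1', e2']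
      _ = (∑' n, f a n) * (∑' n, g b n) := e2.symm
  · have hfb : ¬ Summable (f b) := by
      intro hfb
      apply hfa
      refine Summable.of_nonneg_of_le (hfnn a ha) (fun n => ?_) (hfb.mul_left ((b/a)^2))
      simp only [hf]
      have hln := hl n; have hcn := hc n
      have key : a * (b + l n) ≤ b * (a + l n) := by nlinarith
      have h2 : (a * (b + l n))^2 ≤ (b * (a + l n))^2 := by
        apply sq_le_sq' _ key
        nlinarith
      rw [div_pow, div_mul_div_comm,
        div_le_div_iff₀ (pow_pos (by linarith : (0:ℝ) < a + l n) 2)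
          (mul_pos (pow_pos ha 2) (pow_pos (by linarith : (0:ℝ) < b + l n) 2))]
      nlinarith [mul_le_mul_of_nonneg_left h2 (mul_nonneg hln.le hcn)]
    rw [tsum_eq_zero_of_not_summable hfa, tsum_eq_zero_of_not_summable hfb, zero_div, zero_div]
end

section
/- Let r ≥ 2 and f : [-1,1] → ℝ be the even polynomial of degree at most 2r-2 determined by f(±1) = 0, f'(-1) = 2, f'(1) = -2, and f''(x) = -(4/γ)(1-x²)^{r-2} where γ = ∫_{-1}^1 (1-x²)^{r-2} dx. Then f(x) ≥ 1 - x² for all x ∈ [-1,1], with equality everywhere when r = 2. -/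
open Set intervalIntegral

/-! Write `w = (1 - x²)^n` and `W x = ∫_{-1}^x w`, so that the data give `f' = 2 - (4/γ) W`.
Since `w` is increasing on `[-1, 0]` and even, its average over `[-1, x]` is at most its average
`γ/2` over `[-1, 0]`, i.e. `2 W x ≤ (x + 1) γ`. Hence `f - (1 - x²)` is nondecreasing on `[-1, 0]`
and vanishes at `-1`. The half `[0, 1]` follows by applying this to `x ↦ f (-x)`. -/

theorem MonotoneOn.mul_intervalIntegral_le {g : ℝ → ℝ} {a b x : ℝ}
    (hg : MonotoneOn g (Icc a b)) (hx : x ∈ Icc a b) :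
    (b - a) * ∫ t in a..x, g t ≤ (x - a) * ∫ t in a..b, g t := by
  have hint : ∀ {c d}, c ∈ Icc a b → d ∈ Icc a b →
      IntervalIntegrable g MeasureTheory.volume c d :=
    fun hc hd => (hg.mono (uIcc_subset_Icc hc hd)).intervalIntegrable
  have ha : a ∈ Icc a b := left_mem_Icc.2 (hx.1.trans hx.2)
  have hb : b ∈ Icc a b := right_mem_Icc.2 (hx.1.trans hx.2)
  have h_left : ∫ t in a..x, g t ≤ (x - a) * g x := by
    calc ∫ t in a..x, g t ≤ ∫ _ in a..x, g x :=
          integral_mono_on hx.1 (hint ha hx) intervalIntegrable_const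
            fun t ht => hg ⟨ht.1, ht.2.trans hx.2⟩ hx ht.2
      _ = (x - a) * g x := by rw [integral_const, smul_eq_mul]
  have h_right : (b - x) * g x ≤ ∫ t in x..b, g t := by
    calc (b - x) * g x = ∫ _ in x..b, g x := by rw [integral_const, smul_eq_mul]
      _ ≤ ∫ t in x..b, g t :=
          integral_mono_on hx.2 intervalIntegrable_const (hint hx hb)
            fun t ht => hg hx ⟨hx.1.trans ht.1, ht.2⟩ ht.1
  rw [← integral_add_adjacent_intervals (hint ha hx) (hint hx hb)]
  nlinarith [mul_le_mul_of_nonneg_left h_left (sub_nonneg.2 hx.2),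
    mul_le_mul_of_nonneg_left h_right (sub_nonneg.2 hx.1)]

theorem two_mul_integral_one_sub_sq_pow_le (n : ℕ) {x : ℝ} (hx : x ∈ Icc (-1 : ℝ) 0) :
    2 * ∫ t in (-1 : ℝ)..x, (1 - t ^ 2) ^ n ≤ (x + 1) * ∫ t in (-1 : ℝ)..1, (1 - t ^ 2) ^ n := by
  have hint : ∀ a b : ℝ,
      IntervalIntegrable (fun t : ℝ => (1 - t ^ 2) ^ n) MeasureTheory.volume a b :=
    fun a b => (by fun_prop : Continuous fun t : ℝ => (1 - t ^ 2) ^ n).intervalIntegrable a b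
  have hmono : MonotoneOn (fun t : ℝ => (1 - t ^ 2) ^ n) (Icc (-1) 0) :=
    fun s hs t ht hst => pow_le_pow_left₀ (by nlinarith [hs.1, hs.2]) (by nlinarith [ht.2]) n
  have heven : ∫ t in (0 : ℝ)..1, (1 - t ^ 2) ^ n = ∫ t in (-1 : ℝ)..0, (1 - t ^ 2) ^ n := by
    have h := integral_comp_neg (a := (0 : ℝ)) (b := 1) fun t : ℝ => (1 - t ^ 2) ^ n
    simp only [neg_sq, neg_zero] at h
    exact h
  rw [← integral_add_adjacent_intervals (hint (-1) 0) (hint 0 1), heven]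
  linarith [hmono.mul_intervalIntegral_le hx]

theorem one_sub_sq_le_of_deriv_deriv_eq {n : ℕ} {f : ℝ → ℝ} (hf : ContDiff ℝ 2 f)
    (hγ : (0 : ℝ) < ∫ x in (-1 : ℝ)..1, (1 - x ^ 2) ^ n)
    (hf0 : f (-1) = 0) (hf0' : deriv f (-1) = 2)
    (hf'' : ∀ x : ℝ, deriv (deriv f) x
      = -(4 / (∫ y in (-1 : ℝ)..1, (1 - y ^ 2) ^ n)) * (1 - x ^ 2) ^ n) :
    ∀ x ∈ Icc (-1 : ℝ) 0, 1 - x ^ 2 ≤ f x := by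
  set γ := ∫ y in (-1 : ℝ)..1, (1 - y ^ 2) ^ n
  have hDf : Differentiable ℝ f := hf.differentiable (by norm_num)
  have hDf' : Differentiable ℝ (deriv f) := (hf.deriv' (n := 1)).differentiable one_ne_zero
  have hderiv : ∀ x, deriv f x = 2 - 4 / γ * ∫ t in (-1 : ℝ)..x, (1 - t ^ 2) ^ n := by
    intro x
    have hFTC := integral_deriv_eq_sub' (a := -1) (b := x) (deriv f) (funext hf'')
      (fun t _ => hDf' t)
      (by fun_prop : Continuous fun t : ℝ => -(4 / γ) * (1 - t ^ 2) ^ n).continuousOn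
    rw [integral_const_mul, hf0'] at hFTC
    linarith
  have hDh : Differentiable ℝ fun x => f x - (1 - x ^ 2) := hDf.sub (by fun_prop)
  have hmono : MonotoneOn (fun x => f x - (1 - x ^ 2)) (Icc (-1) 0) := by
    refine monotoneOn_of_deriv_nonneg (convex_Icc _ _) hDh.continuous.continuousOn
      hDh.differentiableOn fun x hx => ?_
    rw [interior_Icc] at hx
    have hW := two_mul_integral_one_sub_sq_pow_le n (Ioo_subset_Icc_self hx)
    have hdiff : deriv (fun x => f x - (1 - x ^ 2)) x = deriv f x + 2 * x := by
      rw [deriv_fun_sub (hDf x) (by fun_prop)]; simp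
    rw [hdiff, hderiv, div_mul_eq_mul_div, ← sub_nonneg]
    have : 4 * (∫ t in (-1 : ℝ)..x, (1 - t ^ 2) ^ n) / γ ≤ 2 * (x + 1) := by
      rw [div_le_iff₀ hγ]; linarith
    linarith [hx.1]
  intro x hx
  have hx_ge := hmono ⟨le_rfl, by norm_num⟩ hx hx.1
  simp only [hf0] at hx_ge
  linarith

theorem eq_one_sub_sq_of_deriv_deriv_eq_neg_two {f : ℝ → ℝ} (hf : ContDiff ℝ 2 f)
    (hf0 : f (-1) = 0) (hf0' : deriv f (-1) = 2) (hf'' : ∀ x, deriv (deriv f) x = -2) (x : ℝ) :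
    f x = 1 - x ^ 2 := by
  have hDf : Differentiable ℝ f := hf.differentiable (by norm_num)
  have hDf' : Differentiable ℝ (deriv f) := (hf.deriv' (n := 1)).differentiable one_ne_zero
  have hDh : Differentiable ℝ fun x => f x - (1 - x ^ 2) := hDf.sub (by fun_prop)
  have hderiv : deriv (fun x => f x - (1 - x ^ 2)) = fun x => deriv f x + 2 * x := by
    ext x; rw [deriv_fun_sub (hDf x) (by fun_prop)]; simp
  have hderiv_zero : ∀ x, deriv f x + 2 * x = 0 := by
    have hconst : ∀ x y, deriv f x + 2 * x = deriv f y + 2 * y :=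
      is_const_of_deriv_eq_zero (hDf'.add (by fun_prop)) fun x => by
        rw [deriv_fun_add (hDf' x) (by fun_prop)]; simp [hf'']
    intro x
    rw [hconst x (-1), hf0']; norm_num
  have hx_eq := is_const_of_deriv_eq_zero hDh (by simpa [hderiv] using hderiv_zero) x (-1)
  rw [hf0] at hx_eq
  linarith

theorem deriv_deriv_comp_neg (f : ℝ → ℝ) (x : ℝ) :
    deriv (deriv fun y => f (-y)) x = deriv (deriv f) (-x) := by
  rw [funext (deriv_comp_neg f), deriv.fun_neg, deriv_comp_neg, neg_neg]

theorem stmt_16_general (r : ℕ) (f : ℝ → ℝ) (hf : ContDiff ℝ (2 : ℕ∞) f)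
    (hγ : (0 : ℝ) < ∫ x in (-1 : ℝ)..1, (1 - x ^ 2) ^ (r - 2))
    (hf0 : f (-1) = 0) (hf1 : f 1 = 0)
    (hf0' : deriv f (-1) = 2) (hf1' : deriv f 1 = -2)
    (hf'' : ∀ x : ℝ, deriv (deriv f) x
      = -(4 / (∫ y in (-1 : ℝ)..1, (1 - y ^ 2) ^ (r - 2))) * (1 - x ^ 2) ^ (r - 2)) :
    (∀ x ∈ Icc (-1 : ℝ) 1, 1 - x ^ 2 ≤ f x) ∧
      (r = 2 → ∀ x ∈ Icc (-1 : ℝ) 1, f x = 1 - x ^ 2) := by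
  refine ⟨fun x hx => ?_, fun hr2 x _ => ?_⟩
  · rcases le_total x 0 with hx0 | hx0
    · exact one_sub_sq_le_of_deriv_deriv_eq hf hγ hf0 hf0' hf'' x ⟨hx.1, hx0⟩
    · have hmirror := one_sub_sq_le_of_deriv_deriv_eq (f := fun y => f (-y))
        (hf.comp contDiff_neg) hγ (by simpa using hf1) (by simp [deriv_comp_neg, hf1'])
        (fun y => by rw [deriv_deriv_comp_neg, hf'', neg_sq]) (-x) ⟨by linarith [hx.2], by linarith⟩
      simpa using hmirror
  · subst hr2
    refine eq_one_sub_sq_of_deriv_deriv_eq_neg_two hf hf0 hf0' (fun y => ?_) x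
    rw [hf'']
    norm_num

/-- Let `r ≥ 2` and let `f` be the (even, degree `≤ 2r-2`) function determined by
`f(±1) = 0`, `f'(-1) = 2`, `f'(1) = -2` and `f'' = -(4/γ)(1-x²)^{r-2}` with
`γ = ∫_{-1}^1 (1-x²)^{r-2} dx`. Then `f(x) ≥ 1 - x²` on `[-1,1]`, with equality
everywhere when `r = 2`. -/
theorem stmt_16 (r : ℕ) (hr : 2 ≤ r) (f : ℝ → ℝ) (hf : ContDiff ℝ (2 : ℕ∞) f)
    (hγ : (0 : ℝ) < ∫ x in (-1 : ℝ)..1, (1 - x ^ 2) ^ (r - 2))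
    (hf0 : f (-1) = 0) (hf1 : f 1 = 0)
    (hf0' : deriv f (-1) = 2) (hf1' : deriv f 1 = -2)
    (hf'' : ∀ x : ℝ, deriv (deriv f) x
      = -(4 / (∫ y in (-1 : ℝ)..1, (1 - y ^ 2) ^ (r - 2))) * (1 - x ^ 2) ^ (r - 2)) :
    (∀ x ∈ Icc (-1 : ℝ) 1, 1 - x ^ 2 ≤ f x) ∧
      (r = 2 → ∀ x ∈ Icc (-1 : ℝ) 1, f x = 1 - x ^ 2) :=
  stmt_16_general r f hf hγ hf0 hf1 hf0' hf1' hf''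
end
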